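/- For p > 1, α > 0, β > 0 with α ≠ β, and ζᵢ, ζⱼ ∈ ℝ with dᵢ = -tanh ζᵢ, dⱼ = -tanh ζⱼ, the integral I₁ = ∫_{-1}^{1} κ(dⱼ,y)^α κ(dᵢ,y)^β (1-y²)^{(α+β)/(p-1) - 1} dy satisfies I₁ ≤ C e^{-(2/(p-1)) min(α,β) |ζᵢ - ζⱼ|} for some constant C = C(p,α,β) independent of ζᵢ, ζⱼ. -/

import Mathlib

/-!
Substituting `y = tanh ξ` turns the integral into
`κ₀ ^ (α + β) * ∫ cosh (ξ - ζj) ^ (-a) * cosh (ξ - ζi) ^ (-b) dξ` with `a = 2α/(p-1)`, `b = 2β/(p-1)`.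
Since `cosh x ≥ e^{|x|} / 2`, the integrand is at most a constant times
`e^{-a|ξ - ζj| - b|ξ - ζi|}`. If `a < b`, the triangle inequality gives
`a|ξ - ζj| + b|ξ - ζi| ≥ a|ζi - ζj| + (b - a)|ξ - ζi|`, and integrating `e^{-(b - a)|ξ - ζi|}`
only costs the factor `2 / (b - a)`.
-/

noncomputable def kappa0 (p : ℝ) : ℝ := (2 * (p + 1) / (p - 1) ^ 2) ^ (1 / (p - 1))

noncomputable def kap (p d y : ℝ) : ℝ :=
  kappa0 p * (1 - d ^ 2) ^ (1 / (p - 1)) / (1 + d * y) ^ (2 / (p - 1))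

open Real MeasureTheory Set

namespace SolitonInteraction

theorem hasDerivAt_tanh (x : ℝ) : HasDerivAt tanh (cosh x ^ 2)⁻¹ x := by
  have h := (hasDerivAt_sinh x).div (hasDerivAt_cosh x) (cosh_pos x).ne'
  rw [show tanh = sinh / cosh from funext tanh_eq_sinh_div_cosh]
  refine h.congr_deriv ?_
  rw [← sq, ← sq, cosh_sq]
  ring

theorem one_sub_tanh_sq (x : ℝ) : 1 - tanh x ^ 2 = (cosh x ^ 2)⁻¹ := by
  rw [tanh_eq_sinh_div_cosh]
  field_simp
  linear_combination cosh_sq x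

theorem one_sub_tanh_mul_tanh (ζ ξ : ℝ) :
    1 - tanh ζ * tanh ξ = cosh (ξ - ζ) / (cosh ζ * cosh ξ) := by
  rw [tanh_eq_sinh_div_cosh, tanh_eq_sinh_div_cosh, cosh_sub]
  field_simp

theorem intervalIntegral_neg_one_one_eq_integral_comp_tanh (g : ℝ → ℝ) :
    ∫ y in (-1 : ℝ)..1, g y = ∫ ξ, g (tanh ξ) / cosh ξ ^ 2 := by
  have h := integral_image_eq_integral_abs_deriv_smul MeasurableSet.univ
    (fun x _ => (hasDerivAt_tanh x).hasDerivWithinAt) tanh_injective.injOn g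
  rw [tanh_bijOn.image_eq, Measure.restrict_univ] at h
  rw [intervalIntegral.integral_of_le (by norm_num), integral_Ioc_eq_integral_Ioo, h]
  congr 1 with ξ
  rw [abs_of_pos (by positivity), smul_eq_mul, div_eq_inv_mul]

theorem kappa0_pos {p : ℝ} (hp : 1 < p) : 0 < kappa0 p := by
  unfold kappa0
  have : 0 < p - 1 := by linarith
  positivity

theorem kap_neg_tanh_tanh (p ζ ξ : ℝ) :
    kap p (-tanh ζ) (tanh ξ) = kappa0 p * (cosh ξ / cosh (ξ - ζ)) ^ (2 / (p - 1)) := by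
  rw [kap, neg_sq, one_sub_tanh_sq, neg_mul, ← sub_eq_add_neg, one_sub_tanh_mul_tanh, ← inv_pow,
    ← rpow_natCast, ← rpow_mul (by positivity), Nat.cast_ofNat, mul_one_div, mul_div_assoc,
    ← div_rpow (by positivity) (by positivity)]
  congr 2
  field_simp

theorem integrand_comp_tanh {p : ℝ} (hp : 1 < p) (α β ζi ζj ξ : ℝ) :
    kap p (-tanh ζj) (tanh ξ) ^ α * kap p (-tanh ζi) (tanh ξ) ^ β
        * (1 - tanh ξ ^ 2) ^ ((α + β) / (p - 1) - 1) / cosh ξ ^ 2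
      = kappa0 p ^ (α + β) * cosh (ξ - ζj) ^ (-(2 / (p - 1) * α))
        * cosh (ξ - ζi) ^ (-(2 / (p - 1) * β)) := by
  have hκ := kappa0_pos hp
  have hξ := cosh_pos ξ
  have hj := cosh_pos (ξ - ζj)
  have hi := cosh_pos (ξ - ζi)
  rw [kap_neg_tanh_tanh, kap_neg_tanh_tanh, one_sub_tanh_sq, mul_rpow hκ.le (by positivity),
    mul_rpow hκ.le (by positivity), ← rpow_mul (by positivity), ← rpow_mul (by positivity),
    div_rpow hξ.le hj.le, div_rpow hξ.le hi.le, ← rpow_natCast, inv_rpow (by positivity),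
    ← rpow_mul hξ.le, rpow_add hκ, rpow_neg hj.le, rpow_neg hi.le]
  have hcancel : cosh ξ ^ (2 / (p - 1) * α) * cosh ξ ^ (2 / (p - 1) * β)
      * (cosh ξ ^ ((2 : ℕ) * ((α + β) / (p - 1) - 1)))⁻¹ / cosh ξ ^ ((2 : ℕ) : ℝ) = 1 := by
    rw [← rpow_add hξ, ← rpow_neg hξ.le, ← rpow_add hξ, ← rpow_sub hξ]
    convert rpow_zero (cosh ξ) using 2
    push_cast
    ring
  linear_combination kappa0 p ^ α * kappa0 p ^ β * (cosh (ξ - ζj) ^ (2 / (p - 1) * α))⁻¹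
    * (cosh (ξ - ζi) ^ (2 / (p - 1) * β))⁻¹ * hcancel

theorem cosh_rpow_neg_le (x : ℝ) {a : ℝ} (ha : 0 ≤ a) :
    cosh x ^ (-a) ≤ 2 ^ a * exp (-(a * |x|)) := by
  have hle : exp |x| / 2 ≤ cosh x := by
    rw [← cosh_abs, cosh_eq]
    linarith [exp_pos (-|x|)]
  calc cosh x ^ (-a) ≤ (exp |x| / 2) ^ (-a) :=
        rpow_le_rpow_of_nonpos (by positivity) hle (by linarith)
    _ = 2 ^ a * exp (-(a * |x|)) := by
      rw [div_rpow (exp_pos _).le zero_le_two, ← exp_mul, rpow_neg zero_le_two]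
      field_simp

theorem integrable_exp_neg_mul_abs_sub {c : ℝ} (hc : 0 < c) (w : ℝ) :
    Integrable (fun x => exp (-(c * |x - w|))) := by
  refine Integrable.comp_sub_right (f := fun x => exp (-(c * |x|))) ?_ w
  rw [← integrableOn_univ, ← Iic_union_Ioi (a := 0)]
  refine IntegrableOn.union ?_ ?_
  · refine (integrableOn_exp_mul_Iic hc 0).congr_fun (fun x hx => ?_) measurableSet_Iic
    rw [abs_of_nonpos hx, mul_neg, neg_neg]
  · refine (integrableOn_exp_mul_Ioi (neg_lt_zero.2 hc) 0).congr_fun (fun x hx => ?_)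
      measurableSet_Ioi
    simp only [abs_of_pos (mem_Ioi.1 hx), neg_mul]

theorem integral_exp_neg_mul_abs_sub {c : ℝ} (hc : 0 < c) (w : ℝ) :
    ∫ x, exp (-(c * |x - w|)) = 2 / c := by
  rw [integral_sub_right_eq_self (fun x => exp (-(c * |x|))),
    integral_comp_abs (f := fun x => exp (-(c * x)))]
  simp_rw [← neg_mul]
  rw [integral_exp_mul_Ioi (neg_lt_zero.2 hc)]
  field_simp
  simp

theorem exp_two_center_le {a b : ℝ} (ha : 0 ≤ a) (u v x : ℝ) :
    exp (-(a * |x - u|)) * exp (-(b * |x - v|))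
      ≤ exp (-(a * |u - v|)) * exp (-((b - a) * |x - v|)) := by
  rw [← exp_add, ← exp_add, exp_le_exp]
  have htri : |u - v| ≤ |x - u| + |x - v| := abs_sub_comm x u ▸ abs_sub_le u x v
  nlinarith [mul_le_mul_of_nonneg_left htri ha]

theorem integrable_exp_two_center {a b : ℝ} (ha : 0 < a) (hb : 0 ≤ b) (u v : ℝ) :
    Integrable (fun x => exp (-(a * |x - u|)) * exp (-(b * |x - v|))) := by
  refine (integrable_exp_neg_mul_abs_sub ha u).mono' (by fun_prop) (ae_of_all _ fun x => ?_)
  rw [norm_of_nonneg (by positivity)]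
  exact mul_le_of_le_one_right (by positivity) (exp_le_one_iff.2 (neg_nonpos.2 (by positivity)))

theorem integral_exp_two_center_le_of_lt {a b : ℝ} (ha : 0 ≤ a) (hab : a < b) (u v : ℝ) :
    ∫ x, exp (-(a * |x - u|)) * exp (-(b * |x - v|)) ≤ 2 / (b - a) * exp (-(a * |u - v|)) :=
  calc ∫ x, exp (-(a * |x - u|)) * exp (-(b * |x - v|))
      ≤ ∫ x, exp (-(a * |u - v|)) * exp (-((b - a) * |x - v|)) :=
        integral_mono_of_nonneg (ae_of_all _ fun x => by positivity)
          ((integrable_exp_neg_mul_abs_sub (sub_pos.2 hab) v).const_mul _)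
          (ae_of_all _ (exp_two_center_le ha u v))
    _ = 2 / (b - a) * exp (-(a * |u - v|)) := by
      rw [integral_const_mul, integral_exp_neg_mul_abs_sub (sub_pos.2 hab), mul_comm]

theorem integral_exp_two_center_le {a b : ℝ} (ha : 0 ≤ a) (hb : 0 ≤ b) (hab : a ≠ b) (u v : ℝ) :
    ∫ x, exp (-(a * |x - u|)) * exp (-(b * |x - v|))
      ≤ 2 / |b - a| * exp (-(min a b * |u - v|)) := by
  rcases hab.lt_or_gt with h | h
  · rw [abs_of_pos (sub_pos.2 h), min_eq_left h.le]
    exact integral_exp_two_center_le_of_lt ha h u v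
  · rw [abs_sub_comm, abs_of_pos (sub_pos.2 h), min_eq_right h.le, abs_sub_comm u v]
    simp_rw [mul_comm (exp (-(a * _)))]
    exact integral_exp_two_center_le_of_lt hb h v u

end SolitonInteraction

open SolitonInteraction in
theorem soliton_interaction_bound (p α β : ℝ) (hp : 1 < p) (hα : 0 < α) (hβ : 0 < β)
    (hαβ : α ≠ β) :
    ∃ C > 0, ∀ ζi ζj : ℝ,
      (∫ y in (-1 : ℝ)..1,
          kap p (-Real.tanh ζj) y ^ α * kap p (-Real.tanh ζi) y ^ β
            * (1 - y ^ 2) ^ ((α + β) / (p - 1) - 1))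
        ≤ C * Real.exp (-(2 / (p - 1)) * min α β * |ζi - ζj|) := by
  have hs : 0 < 2 / (p - 1) := div_pos two_pos (by linarith)
  set a := 2 / (p - 1) * α
  set b := 2 / (p - 1) * β
  have hκ := kappa0_pos hp
  have hab : a ≠ b := fun h => hαβ (mul_left_cancel₀ hs.ne' h)
  have hba : 0 < |b - a| := abs_pos.2 (sub_ne_zero.2 hab.symm)
  set K := kappa0 p ^ (α + β) * 2 ^ a * 2 ^ b
  refine ⟨K * (2 / |b - a|), by positivity, fun ζi ζj => ?_⟩
  rw [intervalIntegral_neg_one_one_eq_integral_comp_tanh]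
  calc ∫ ξ, kap p (-tanh ζj) (tanh ξ) ^ α * kap p (-tanh ζi) (tanh ξ) ^ β
          * (1 - tanh ξ ^ 2) ^ ((α + β) / (p - 1) - 1) / cosh ξ ^ 2
      = ∫ ξ, kappa0 p ^ (α + β) * cosh (ξ - ζj) ^ (-a) * cosh (ξ - ζi) ^ (-b) := by
        congr 1 with ξ
        exact integrand_comp_tanh hp α β ζi ζj ξ
    _ ≤ ∫ ξ, K * (exp (-(a * |ξ - ζj|)) * exp (-(b * |ξ - ζi|))) := by
        refine integral_mono_of_nonneg (ae_of_all _ fun ξ => by positivity)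
          ((integrable_exp_two_center (by positivity) (by positivity) ζj ζi).const_mul K)
          (ae_of_all _ fun ξ => ?_)
        calc kappa0 p ^ (α + β) * cosh (ξ - ζj) ^ (-a) * cosh (ξ - ζi) ^ (-b)
            ≤ kappa0 p ^ (α + β) * (2 ^ a * exp (-(a * |ξ - ζj|)))
              * (2 ^ b * exp (-(b * |ξ - ζi|))) := by
              gcongr <;> exact cosh_rpow_neg_le _ (by positivity)
          _ = K * (exp (-(a * |ξ - ζj|)) * exp (-(b * |ξ - ζi|))) := by ring
    _ ≤ K * (2 / |b - a| * exp (-(min a b * |ζj - ζi|))) := by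
        rw [integral_const_mul]
        gcongr
        exact integral_exp_two_center_le (by positivity) (by positivity) hab ζj ζi
    _ = K * (2 / |b - a|) * exp (-(2 / (p - 1)) * min α β * |ζi - ζj|) := by
        rw [← mul_min_of_nonneg _ _ hs.le, abs_sub_comm ζj ζi]
        ring_nf
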